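/- arXiv:1008.4631 — 2 statements merged into one kernel-verified Lean document; each statement's English description precedes it below -/
import Mathlib

section
/- A sequence (f_n) in L²(ℝ^d) converges strongly in L² to f if and only if it converges weakly to f, satisfies lim_{R→∞} limsup_{n→∞} ∫_{|x|>R} |f_n(x)|² dx = 0, and lim_{L→∞} limsup_{n→∞} ∫_{|k|>L} |\hat{f_n}(k)|² dk = 0, where \hat{f} denotes the Fourier transform. -/
/-!
Strong convergence gives weak convergence at once, and the position and frequency tails of a
convergent sequence are asymptotically those of its limit, which vanish as `R, L → ∞`.

Conversely, a weakly convergent sequence is bounded by uniform boundedness. For `h = fₙ - g`,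
with `P_R` the multiplication by `1_{|x| > R}` and `Q_R = 1 - P_R`, one has
`‖h‖ ≤ 2 ‖P_R h‖ + ‖P_L (F h)‖ + ‖Q_L F Q_R h‖`.
The first two terms are uniformly small by tightness. The last one tends to `0` for fixed
`R, L`: the value of `F (Q_R h)` at `k` is the inner product of `h` with the plane wave
`e^{2πi⟨x,k⟩}` cut off to `|x| ≤ R`, so it tends to `0` pointwise by weak convergence and is
uniformly bounded, and dominated convergence on the ball `|k| ≤ L` applies.
-/

open Filter Topology MeasureTheory FourierTransform
open scoped ENNReal InnerProductSpace

namespace MeasureTheory.Lp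

variable {α E 𝕜 : Type*} [MeasurableSpace α] {μ : Measure α} [NormedAddCommGroup E]
  [NormedField 𝕜] [NormedSpace 𝕜 E] {p : ℝ≥0∞} {s : Set α}

theorem norm_toLp_indicator_le (hs : MeasurableSet s) (f : Lp E p μ) :
    ‖((Lp.memLp f).indicator hs).toLp _‖ ≤ ‖f‖ := by
  rw [Lp.norm_toLp, Lp.norm_def]
  exact ENNReal.toReal_mono (Lp.eLpNorm_ne_top f) (eLpNorm_indicator_le _)

variable [Fact (1 ≤ p)]

variable (𝕜) in
noncomputable def indicatorCLM (hs : MeasurableSet s) : Lp E p μ →L[𝕜] Lp E p μ :=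
  LinearMap.mkContinuous
    { toFun := fun f => ((Lp.memLp f).indicator hs).toLp _
      map_add' := fun f g => by
        rw [← MemLp.toLp_add]
        refine MemLp.toLp_congr _ _ ?_
        filter_upwards [Lp.coeFn_add f g] with x hx
        by_cases hxs : x ∈ s
        · simp only [Pi.add_apply, Set.indicator_of_mem hxs, hx]
        · simp [Set.indicator_of_notMem hxs]
      map_smul' := fun c f => by
        rw [RingHom.id_apply, ← MemLp.toLp_const_smul]
        refine MemLp.toLp_congr _ _ ?_
        filter_upwards [Lp.coeFn_smul c f] with x hx
        by_cases hxs : x ∈ s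
        · simp only [Pi.smul_apply, Set.indicator_of_mem hxs, hx]
        · simp [Set.indicator_of_notMem hxs] }
    1 fun f => (one_mul ‖f‖).symm ▸ norm_toLp_indicator_le hs f

theorem indicatorCLM_apply (hs : MeasurableSet s) (f : Lp E p μ) :
    indicatorCLM 𝕜 hs f = ((Lp.memLp f).indicator hs).toLp _ := rfl

theorem coeFn_indicatorCLM (hs : MeasurableSet s) (f : Lp E p μ) :
    indicatorCLM 𝕜 hs f =ᵐ[μ] s.indicator f := by
  rw [indicatorCLM_apply]
  exact MemLp.coeFn_toLp _

theorem norm_indicatorCLM_le (hs : MeasurableSet s) (f : Lp E p μ) :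
    ‖indicatorCLM 𝕜 hs f‖ ≤ ‖f‖ :=
  norm_toLp_indicator_le hs f

theorem indicatorCLM_add_indicatorCLM_compl (hs : MeasurableSet s) (f : Lp E p μ) :
    indicatorCLM 𝕜 hs f + indicatorCLM 𝕜 hs.compl f = f := by
  apply Lp.ext
  filter_upwards [Lp.coeFn_add (indicatorCLM 𝕜 hs f) (indicatorCLM 𝕜 hs.compl f),
    coeFn_indicatorCLM (𝕜 := 𝕜) hs f, coeFn_indicatorCLM (𝕜 := 𝕜) hs.compl f] with x hx h h'
  rw [hx, Pi.add_apply, h, h', Set.indicator_self_add_compl_apply]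

theorem norm_le_two_mul_norm_indicatorCLM_add {β E' : Type*} [MeasurableSpace β]
    {ν : Measure β} [NormedAddCommGroup E'] [NormedSpace 𝕜 E'] {q : ℝ≥0∞} [Fact (1 ≤ q)]
    (F : Lp E p μ →ₗᵢ[𝕜] Lp E' q ν) (hs : MeasurableSet s) {t : Set β} (ht : MeasurableSet t)
    (f : Lp E p μ) :
    ‖f‖ ≤ 2 * ‖indicatorCLM 𝕜 hs f‖ + ‖indicatorCLM 𝕜 ht (F f)‖
      + ‖indicatorCLM 𝕜 ht.compl (F (indicatorCLM 𝕜 hs.compl f))‖ := by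
  set P := indicatorCLM (E := E) (μ := μ) (p := p) 𝕜 hs
  set Q := indicatorCLM (E := E) (μ := μ) (p := p) 𝕜 hs.compl
  set P' := indicatorCLM (E := E') (μ := ν) (p := q) 𝕜 ht
  set Q' := indicatorCLM (E := E') (μ := ν) (p := q) 𝕜 ht.compl
  have hPQ : P f + Q f = f := indicatorCLM_add_indicatorCLM_compl hs f
  have hP'Q' : P' (F (Q f)) + Q' (F (Q f)) = F (Q f) :=
    indicatorCLM_add_indicatorCLM_compl ht _
  have hP' : P' (F (Q f)) = P' (F f) - P' (F (P f)) := by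
    rw [← map_sub, ← map_sub, ← eq_sub_of_add_eq' hPQ]
  calc ‖f‖ = ‖P f + Q f‖ := by rw [hPQ]
    _ ≤ ‖P f‖ + ‖Q f‖ := norm_add_le _ _
    _ = ‖P f‖ + ‖P' (F (Q f)) + Q' (F (Q f))‖ := by rw [hP'Q', F.norm_map]
    _ ≤ ‖P f‖ + (‖P' (F f)‖ + ‖P' (F (P f))‖ + ‖Q' (F (Q f))‖) := by
      gcongr
      exact (norm_add_le _ _).trans (by rw [hP']; gcongr; exact norm_sub_le _ _)
    _ ≤ ‖P f‖ + (‖P' (F f)‖ + ‖P f‖ + ‖Q' (F (Q f))‖) := by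
      gcongr
      exact (norm_indicatorCLM_le ht _).trans (F.norm_map _).le
    _ = _ := by ring

theorem norm_sq_eq_integral_norm_sq (f : Lp E 2 μ) : ‖f‖ ^ 2 = ∫ x, ‖f x‖ ^ 2 ∂μ := by
  have hint : 0 ≤ ∫ x, ‖f x‖ ^ (2 : ℝ) ∂μ := integral_nonneg fun x => by positivity
  rw [Lp.norm_def, (Lp.memLp f).eLpNorm_eq_integral_rpow_norm two_ne_zero ENNReal.ofNat_ne_top,
    ENNReal.toReal_ofReal (by positivity), ENNReal.toReal_ofNat, ← Real.rpow_natCast,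
    ← Real.rpow_mul hint]
  norm_num

theorem norm_indicatorCLM_sq (hs : MeasurableSet s) (f : Lp E 2 μ) :
    ‖indicatorCLM 𝕜 hs f‖ ^ 2 = ∫ x in s, ‖f x‖ ^ 2 ∂μ := by
  rw [norm_sq_eq_integral_norm_sq, ← integral_indicator hs]
  refine integral_congr_ae ?_
  filter_upwards [coeFn_indicatorCLM (𝕜 := 𝕜) hs f] with x hx
  by_cases hxs : x ∈ s <;> simp [hx, hxs]

theorem integrable_indicator_of_measure_ne_top (hs : MeasurableSet s) (hμs : μ s ≠ ∞)
    (f : Lp E p μ) : Integrable (s.indicator f) μ := by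
  have : IsFiniteMeasure (μ.restrict s) := isFiniteMeasure_restrict.2 hμs
  exact (integrable_indicator_iff hs).2 (((Lp.memLp f).restrict s).integrable Fact.out)

end MeasureTheory.Lp

open MeasureTheory.Lp

section Tail

variable {V E : Type*} [NormedAddCommGroup V] [MeasurableSpace V] {μ : Measure V}
  [NormedAddCommGroup E]

theorem measure_compl_norm_gt_ne_top [ProperSpace V] [IsFiniteMeasureOnCompacts μ] (R : ℝ) :
    μ {x : V | R < ‖x‖}ᶜ ≠ ∞ := by
  have hball : {x : V | R < ‖x‖}ᶜ = Metric.closedBall 0 R := by ext; simp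
  exact hball ▸ (isCompact_closedBall 0 R).measure_lt_top.ne

variable [OpensMeasurableSpace V]

theorem measurableSet_norm_gt (R : ℝ) : MeasurableSet {x : V | R < ‖x‖} :=
  measurableSet_lt measurable_const measurable_norm

theorem tendsto_setIntegral_norm_gt [NormedSpace ℝ E] {f : V → E} (hf : Integrable f μ) :
    Tendsto (fun R : ℝ => ∫ x in {x | R < ‖x‖}, f x ∂μ) atTop (𝓝 0) := by
  have hempty : ⋂ R : ℝ, {x : V | R < ‖x‖} = ∅ :=
    Set.iInter_eq_empty_iff.2 fun x => ⟨‖x‖, lt_irrefl ‖x‖⟩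
  simpa [hempty] using tendsto_setIntegral_of_antitone measurableSet_norm_gt
    (fun R R' h x (hx : R' < ‖x‖) => h.trans_lt hx) ⟨0, hf.integrableOn⟩

theorem tendsto_limsup_setIntegral_norm_gt_of_tendsto [NormedSpace ℝ E] {u : ℕ → Lp E 2 μ}
    {w : Lp E 2 μ} (hu : Tendsto u atTop (𝓝 w)) :
    Tendsto (fun R : ℝ => limsup (fun n => ∫ x in {x | R < ‖x‖}, ‖u n x‖ ^ 2 ∂μ) atTop)
      atTop (𝓝 0) := by
  have hlimsup (R : ℝ) : limsup (fun n => ∫ x in {x | R < ‖x‖}, ‖u n x‖ ^ 2 ∂μ) atTop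
      = ∫ x in {x | R < ‖x‖}, ‖w x‖ ^ 2 ∂μ := by
    simp_rw [← norm_indicatorCLM_sq (𝕜 := ℝ) (measurableSet_norm_gt R)]
    exact ((((indicatorCLM ℝ _).continuous.tendsto w).comp hu).norm.pow 2).limsup_eq
  simp_rw [hlimsup]
  exact tendsto_setIntegral_norm_gt ((Lp.memLp w).integrable_norm_pow two_ne_zero)

theorem exists_eventually_norm_indicatorCLM_sub_lt {𝕜 : Type*} [NormedField 𝕜]
    [NormedSpace 𝕜 E] {u : ℕ → Lp E 2 μ} {C : ℝ} (hC : ∀ n, ‖u n‖ ≤ C)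
    (hu : Tendsto (fun R : ℝ => limsup (fun n => ∫ x in {x | R < ‖x‖}, ‖u n x‖ ^ 2 ∂μ) atTop)
      atTop (𝓝 0))
    (w : Lp E 2 μ) {δ : ℝ} (hδ : 0 < δ) :
    ∃ R, ∀ᶠ n in atTop, ‖indicatorCLM 𝕜 (measurableSet_norm_gt R) (u n - w)‖ < 2 * δ := by
  have hw := tendsto_setIntegral_norm_gt (μ := μ) ((Lp.memLp w).integrable_norm_pow two_ne_zero)
  obtain ⟨R, hRu, hRw⟩ := ((hu.eventually (gt_mem_nhds (pow_pos hδ 2))).and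
    (hw.eventually (gt_mem_nhds (pow_pos hδ 2)))).exists
  have hbdd : IsBoundedUnder (· ≤ ·) atTop
      (fun n => ∫ x in {x | R < ‖x‖}, ‖u n x‖ ^ 2 ∂μ) := by
    refine isBoundedUnder_of ⟨C ^ 2, fun n => ?_⟩
    rw [← norm_indicatorCLM_sq (𝕜 := 𝕜) (measurableSet_norm_gt R)]
    exact pow_le_pow_left₀ (norm_nonneg _) ((norm_indicatorCLM_le _ _).trans (hC n)) 2
  refine ⟨R, (eventually_lt_of_limsup_lt hRu hbdd).mono fun n hn => ?_⟩
  rw [← norm_indicatorCLM_sq (𝕜 := 𝕜) (measurableSet_norm_gt R)] at hn hRw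
  calc ‖indicatorCLM 𝕜 _ (u n - w)‖
      ≤ ‖indicatorCLM 𝕜 (measurableSet_norm_gt R) (u n)‖
        + ‖indicatorCLM 𝕜 (measurableSet_norm_gt R) w‖ := by
        rw [map_sub]; exact norm_sub_le _ _
    _ < δ + δ :=
      add_lt_add (lt_of_pow_lt_pow_left₀ 2 hδ.le hn) (lt_of_pow_lt_pow_left₀ 2 hδ.le hRw)
    _ = 2 * δ := (two_mul δ).symm

end Tail

theorem exists_norm_le_of_forall_tendsto_dual {𝕜 E : Type*} [RCLike 𝕜] [NormedAddCommGroup E]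
    [NormedSpace 𝕜 E] {f : ℕ → E} {g : E}
    (hf : ∀ φ : StrongDual 𝕜 E, Tendsto (fun n => φ (f n)) atTop (𝓝 (φ g))) :
    ∃ C, ∀ n, ‖f n‖ ≤ C := by
  obtain ⟨C, hC⟩ := banach_steinhaus (g := fun n => NormedSpace.inclusionInDoubleDual 𝕜 E (f n))
    fun φ => by
      obtain ⟨C, hC⟩ := (hf φ).norm.bddAbove_range
      exact ⟨C, fun n => hC ⟨n, rfl⟩⟩
  exact ⟨C, fun n => (NormedSpace.inclusionInDoubleDualLi 𝕜).norm_map (f n) ▸ hC n⟩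

section Fourier

open scoped RealInnerProductSpace

variable {V : Type*} [NormedAddCommGroup V] [InnerProductSpace ℝ V] [FiniteDimensional ℝ V]
  [MeasurableSpace V] [BorelSpace V] {s : Set V}

theorem memLp_indicator_fourierChar (hs : MeasurableSet s) (hsfin : volume s ≠ ∞) (k : V) :
    MemLp (s.indicator fun v => (𝐞 ⟪v, k⟫ : ℂ)) 2 volume := by
  have : IsFiniteMeasure (volume.restrict s) := isFiniteMeasure_restrict.2 hsfin
  refine (memLp_indicator_iff_restrict hs).2 (MemLp.of_bound ?_ 1 (ae_of_all _ fun v => ?_))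
  exact (continuous_subtype_val.comp (Real.continuous_fourierChar.comp
    (continuous_id.inner continuous_const))).aestronglyMeasurable
  simp [Circle.norm_coe]

noncomputable def truncatedPlaneWave (hs : MeasurableSet s) (hsfin : volume s ≠ ∞) (k : V) :
    Lp ℂ 2 (volume : Measure V) :=
  (memLp_indicator_fourierChar hs hsfin k).toLp _

theorem norm_truncatedPlaneWave_sq (hs : MeasurableSet s) (hsfin : volume s ≠ ∞) (k : V) :
    ‖truncatedPlaneWave hs hsfin k‖ ^ 2 = volume.real s := by
  rw [Lp.norm_sq_eq_integral_norm_sq, ← integral_indicator_one hs]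
  refine integral_congr_ae ?_
  filter_upwards [MemLp.coeFn_toLp (memLp_indicator_fourierChar hs hsfin k)] with v hv
  by_cases hvs : v ∈ s <;> simp [truncatedPlaneWave, hv, hvs, Circle.norm_coe]

theorem fourier_indicator_eq_inner_truncatedPlaneWave (hs : MeasurableSet s)
    (hsfin : volume s ≠ ∞) (h : Lp ℂ 2 (volume : Measure V)) (k : V) :
    𝓕 (s.indicator h) k = ⟪truncatedPlaneWave hs hsfin k, h⟫_ℂ := by
  rw [L2.inner_def, Real.fourier_eq (E := ℂ)]
  refine integral_congr_ae ?_
  filter_upwards [MemLp.coeFn_toLp (memLp_indicator_fourierChar hs hsfin k)] with v hv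
  by_cases hvs : v ∈ s <;> simp [truncatedPlaneWave, hv, hvs, Circle.smul_def, mul_comm]

theorem tendsto_norm_indicatorCLM_fourier_indicatorCLM
    (F : Lp ℂ 2 (volume : Measure V) → Lp ℂ 2 (volume : Measure V))
    (hF : ∀ g : Lp ℂ 2 (volume : Measure V), Integrable g → F g =ᵐ[volume] 𝓕 (g : V → ℂ))
    {h : ℕ → Lp ℂ 2 (volume : Measure V)}
    (hweak : ∀ w, Tendsto (fun n => ⟪w, h n⟫_ℂ) atTop (𝓝 0)) {M : ℝ} (hM : ∀ n, ‖h n‖ ≤ M)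
    (hs : MeasurableSet s) (hsfin : volume s ≠ ∞) {t : Set V} (ht : MeasurableSet t)
    (htfin : volume t ≠ ∞) :
    Tendsto (fun n => ‖indicatorCLM ℂ ht (F (indicatorCLM ℂ hs (h n)))‖) atTop (𝓝 0) := by
  have hsq (n : ℕ) : ‖indicatorCLM ℂ ht (F (indicatorCLM ℂ hs (h n)))‖ ^ 2
      = ∫ k in t, ‖𝓕 (s.indicator (h n)) k‖ ^ 2 := by
    rw [norm_indicatorCLM_sq (𝕜 := ℂ)]
    refine setIntegral_congr_ae ht ?_
    filter_upwards [hF _ ((integrable_indicator_of_measure_ne_top hs hsfin (h n)).congr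
      (coeFn_indicatorCLM (𝕜 := ℂ) hs (h n)).symm)] with k hk _
    rw [hk, Real.fourier_congr_ae (coeFn_indicatorCLM (𝕜 := ℂ) hs (h n))]
  have hbound (n : ℕ) (k : V) : ‖𝓕 (s.indicator (h n)) k‖ ^ 2 ≤ volume.real s * M ^ 2 := by
    rw [fourier_indicator_eq_inner_truncatedPlaneWave hs hsfin,
      ← norm_truncatedPlaneWave_sq hs hsfin k, ← mul_pow]
    exact pow_le_pow_left₀ (norm_nonneg _)
      ((norm_inner_le_norm _ _).trans (mul_le_mul_of_nonneg_left (hM n) (norm_nonneg _))) 2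
  have : IsFiniteMeasure (volume.restrict t) := isFiniteMeasure_restrict.2 htfin
  have hsq_tendsto : Tendsto (fun n => ‖indicatorCLM ℂ ht (F (indicatorCLM ℂ hs (h n)))‖ ^ 2)
      atTop (𝓝 0) := by
    simp_rw [hsq]
    have hmeas (n : ℕ) : AEStronglyMeasurable (fun k => ‖𝓕 (s.indicator (h n)) k‖ ^ 2)
        (volume.restrict t) :=
      ((VectorFourier.fourierIntegral_continuous Real.continuous_fourierChar continuous_inner
        (integrable_indicator_of_measure_ne_top hs hsfin (h n))).norm.pow 2).aestronglyMeasurable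
    simpa using tendsto_integral_of_dominated_convergence
      (F := fun n k => ‖𝓕 (s.indicator (h n)) k‖ ^ 2) (f := fun _ => 0)
      (fun _ => volume.real s * M ^ 2) hmeas (integrable_const _)
      (fun n => ae_of_all _ fun k => by simpa using hbound n k)
      (ae_of_all _ fun k => by
        simpa [fourier_indicator_eq_inner_truncatedPlaneWave hs hsfin] using
          ((hweak (truncatedPlaneWave hs hsfin k)).norm.pow 2))
  simpa using hsq_tendsto.sqrt

theorem tendsto_of_weak_of_tight
    (F : Lp ℂ 2 (volume : Measure V) →ₗᵢ[ℂ] Lp ℂ 2 (volume : Measure V))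
    (hF : ∀ g : Lp ℂ 2 (volume : Measure V), Integrable g → F g =ᵐ[volume] 𝓕 (g : V → ℂ))
    {f : ℕ → Lp ℂ 2 (volume : Measure V)} {g : Lp ℂ 2 (volume : Measure V)}
    (hweak : ∀ φ : StrongDual ℂ (Lp ℂ 2 (volume : Measure V)),
      Tendsto (fun n => φ (f n)) atTop (𝓝 (φ g)))
    (hR : Tendsto (fun R : ℝ => limsup (fun n => ∫ x in {x | R < ‖x‖}, ‖f n x‖ ^ 2) atTop)
      atTop (𝓝 0))
    (hL : Tendsto (fun L : ℝ => limsup (fun n => ∫ k in {k | L < ‖k‖}, ‖F (f n) k‖ ^ 2) atTop)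
      atTop (𝓝 0)) :
    Tendsto f atTop (𝓝 g) := by
  obtain ⟨C, hC⟩ := exists_norm_le_of_forall_tendsto_dual hweak
  have hweak_sub (w : Lp ℂ 2 (volume : Measure V)) :
      Tendsto (fun n => ⟪w, f n - g⟫_ℂ) atTop (𝓝 0) := by
    simpa [inner_sub_right] using (hweak (innerSL ℂ w)).sub_const ⟪w, g⟫_ℂ
  have hbound (n : ℕ) : ‖f n - g‖ ≤ C + ‖g‖ := (norm_sub_le _ _).trans (by gcongr; exact hC n)
  refine Metric.tendsto_nhds.2 fun ε hε => ?_
  have hδ : 0 < ε / 8 := by positivity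
  obtain ⟨R, hRn⟩ := exists_eventually_norm_indicatorCLM_sub_lt (𝕜 := ℂ) hC hR g hδ
  obtain ⟨L, hLn⟩ := exists_eventually_norm_indicatorCLM_sub_lt (𝕜 := ℂ)
    (fun n => (F.norm_map (f n)).trans_le (hC n)) hL (F g) hδ
  have hcompact := tendsto_norm_indicatorCLM_fourier_indicatorCLM F hF hweak_sub hbound
    (measurableSet_norm_gt R).compl (measure_compl_norm_gt_ne_top R)
    (measurableSet_norm_gt L).compl (measure_compl_norm_gt_ne_top L)
  filter_upwards [hRn, hLn, hcompact.eventually (gt_mem_nhds hδ)] with n hRn hLn hcompact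
  rw [← map_sub] at hLn
  have hsplit := norm_le_two_mul_norm_indicatorCLM_add F
    (measurableSet_norm_gt R) (measurableSet_norm_gt L) (f n - g)
  rw [_root_.dist_eq_norm]
  linarith

end Fourier

/-- A sequence `(fₙ)` in `L²(ℝᵈ)` converges strongly in `L²` to `f` iff it converges weakly
to `f`, is tight in position space, and is tight in Fourier space.  Here `F` is the unitary
Fourier transform on `L²(ℝᵈ)`, i.e. the unitary extension of the Fourier integral. -/
theorem L2_strong_convergence_iff_weak_and_tight
    (d : ℕ)
    (F : Lp ℂ 2 (volume : Measure (EuclideanSpace ℝ (Fin d))) ≃ₗᵢ[ℂ]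
         Lp ℂ 2 (volume : Measure (EuclideanSpace ℝ (Fin d))))
    (hF : ∀ g : Lp ℂ 2 (volume : Measure (EuclideanSpace ℝ (Fin d))),
        Integrable (g : EuclideanSpace ℝ (Fin d) → ℂ) volume →
        (F g : EuclideanSpace ℝ (Fin d) → ℂ) =ᵐ[volume] 𝓕 (g : EuclideanSpace ℝ (Fin d) → ℂ))
    (f : ℕ → Lp ℂ 2 (volume : Measure (EuclideanSpace ℝ (Fin d))))
    (g : Lp ℂ 2 (volume : Measure (EuclideanSpace ℝ (Fin d)))) :
    Tendsto f atTop (𝓝 g) ↔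
      ((∀ φ : StrongDual ℂ (Lp ℂ 2 (volume : Measure (EuclideanSpace ℝ (Fin d)))),
          Tendsto (fun n => φ (f n)) atTop (𝓝 (φ g))) ∧
        Tendsto (fun R : ℝ =>
            Filter.limsup (fun n =>
              ∫ x in {x : EuclideanSpace ℝ (Fin d) | R < ‖x‖}, ‖(f n : EuclideanSpace ℝ (Fin d) → ℂ) x‖ ^ 2)
              atTop)
          atTop (𝓝 0) ∧
        Tendsto (fun L : ℝ =>
            Filter.limsup (fun n =>
              ∫ k in {k : EuclideanSpace ℝ (Fin d) | L < ‖k‖}, ‖(F (f n) : EuclideanSpace ℝ (Fin d) → ℂ) k‖ ^ 2)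
              atTop)
          atTop (𝓝 0)) := by
  refine ⟨fun hf => ⟨fun φ => (φ.continuous.tendsto g).comp hf,
    tendsto_limsup_setIntegral_norm_gt_of_tendsto hf,
    tendsto_limsup_setIntegral_norm_gt_of_tendsto ((F.continuous.tendsto g).comp hf)⟩, ?_⟩
  rintro ⟨hweak, hR, hL⟩
  exact tendsto_of_weak_of_tight F.toLinearIsometry hF hweak hR hL
end

section
/- For x,y ∈ ℤ, t ∈ ℝ with |t| ≤ τ, the matrix element of the free discrete Schrödinger evolution satisfies |⟨δ_x, e^{itΔ} δ_y⟩| ≤ min(1, e^{4τ} (4τ)^{|x-y|} / |x-y|!). -/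
local notation "ℓ²" => lp (fun _ : ℤ => ℂ) 2

/-!
Summation by parts makes `Δ` self-adjoint, so `e^{itΔ}` is unitary and every matrix element has
modulus at most `1`. For the other bound, expand `e^{itΔ}` in its power series. Since `Δ` only
couples neighbouring sites and its coefficients have total size `4`, the entry `(Δⁿ δ_y)(x)`
vanishes for `n < d = |x - y|` and has modulus at most `4ⁿ`. The matrix element is therefore
bounded by the tail `∑_{n ≥ d} (4τ)ⁿ / n!`, and `d! k! ≤ (d + k)!` bounds that tail by
`(4τ)ᵈ / d! · e^{4τ}`.
-/

open scoped ComplexConjugate InnerProductSpace Nat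

theorem IsSelfAdjoint.exp_I_mul_smul_mem_unitary {𝔸 : Type*} [NormedRing 𝔸] [NormedAlgebra ℂ 𝔸]
    [StarRing 𝔸] [ContinuousStar 𝔸] [CompleteSpace 𝔸] [StarModule ℂ 𝔸] {a : 𝔸}
    (ha : IsSelfAdjoint a) (t : ℝ) :
    NormedSpace.exp ((Complex.I * t) • a) ∈ unitary 𝔸 := by
  let +nondep : NormedAlgebra ℚ 𝔸 := .restrictScalars ℚ ℂ 𝔸
  refine NormedSpace.exp_mem_unitary_of_mem_skewAdjoint (ha.smul_mem_skewAdjoint ?_)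
  simp [skewAdjoint.mem_iff, Complex.conj_ofReal]

theorem inner_exp_smul_apply_eq_tsum {𝕜 H : Type*} [RCLike 𝕜] [NormedAddCommGroup H]
    [InnerProductSpace 𝕜 H] [CompleteSpace H] (A : H →L[𝕜] H) (c : 𝕜) (u v : H) :
    ⟪u, NormedSpace.exp (c • A) v⟫_𝕜 = ∑' n, c ^ n / n ! * ⟪u, (A ^ n) v⟫_𝕜 := by
  let Φ : (H →L[𝕜] H) →L[𝕜] 𝕜 := (innerSL 𝕜 u).comp (ContinuousLinearMap.apply 𝕜 H v)
  change Φ _ = _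
  rw [NormedSpace.exp_eq_tsum 𝕜, Φ.map_tsum (NormedSpace.expSeries_summable' _)]
  refine tsum_congr fun n => ?_
  simp [Φ, smul_pow, div_eq_inv_mul, mul_assoc]

theorem norm_tsum_le_exp_mul_pow_div_factorial {E : Type*} [SeminormedAddCommGroup E]
    {a : ℕ → E} {r : ℝ} {d : ℕ} (hzero : ∀ n < d, a n = 0) (hle : ∀ n, ‖a n‖ ≤ r ^ n / n !) :
    ‖∑' n, a n‖ ≤ Real.exp r * r ^ d / d ! := by
  have hr : 0 ≤ r := by simpa using (norm_nonneg _).trans (hle 1)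
  have hsum : Summable fun n => ‖a n‖ :=
    .of_nonneg_of_le (fun _ => norm_nonneg _) hle (Real.summable_pow_div_factorial r)
  have hshift : ∑' n, ‖a n‖ = ∑' k, ‖a (k + d)‖ := by
    rw [← hsum.sum_add_tsum_nat_add d, Finset.sum_eq_zero fun n hn => ?_, zero_add]
    rw [hzero n (Finset.mem_range.1 hn), norm_zero]
  have hexp : Real.exp r = ∑' k, r ^ k / k ! := by
    rw [Real.exp_eq_exp_ℝ, NormedSpace.exp_eq_tsum_div]
  calc ‖∑' n, a n‖ ≤ ∑' k, ‖a (k + d)‖ := hshift ▸ norm_tsum_le_tsum_norm hsum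
    _ ≤ ∑' k, r ^ d / d ! * (r ^ k / k !) := by
      refine (hsum.comp_injective (add_left_injective d)).tsum_le_tsum (fun k => ?_)
        ((Real.summable_pow_div_factorial r).mul_left _)
      have hfac : (d ! * k ! : ℝ) ≤ (k + d)! := by
        rw [add_comm]
        exact_mod_cast Nat.le_of_dvd (Nat.factorial_pos _)
          (Nat.factorial_mul_factorial_dvd_factorial_add d k)
      calc ‖a (k + d)‖ ≤ r ^ (k + d) / (k + d)! := hle _
        _ ≤ r ^ (k + d) / (d ! * k !) := by gcongr
        _ = r ^ d / d ! * (r ^ k / k !) := by rw [pow_add, div_mul_div_comm, mul_comm (r ^ k)]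
    _ = Real.exp r * r ^ d / d ! := by rw [tsum_mul_left, ← hexp]; ring

theorem lp.summable_norm_sq {ι : Type*} (f : lp (fun _ : ι => ℂ) 2) :
    Summable fun i => ‖f i‖ ^ 2 := by
  simpa using (lp.memℓp f).summable (p := 2) (by norm_num)

theorem lp.summable_conj_comp_mul_comp {ι : Type*} (f g : lp (fun _ : ι => ℂ) 2)
    (e e' : ι ≃ ι) : Summable fun i => conj (f (e i)) * g (e' i) := by
  have hf := e.summable_iff.2 (lp.summable_norm_sq f)
  have hg := e'.summable_iff.2 (lp.summable_norm_sq g)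
  refine .of_norm_bounded ((hf.add hg).div_const 2) fun i => ?_
  rw [norm_mul, RCLike.norm_conj]
  simp only [Function.comp_apply]
  linarith [two_mul_le_add_sq ‖f (e i)‖ ‖g (e' i)‖]

def IsDiscreteLaplacian (Δ : ℓ² →L[ℂ] ℓ²) : Prop :=
  ∀ (f : ℓ²) (x : ℤ), Δ f x = f (x + 1) + f (x - 1) - 2 * f x

namespace IsDiscreteLaplacian

variable {Δ : ℓ² →L[ℂ] ℓ²} (hΔ : IsDiscreteLaplacian Δ)
include hΔ

theorem isSelfAdjoint : IsSelfAdjoint Δ := by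
  refine ContinuousLinearMap.isSelfAdjoint_iff_isSymmetric.2 fun f g => ?_
  have hsumm := lp.summable_conj_comp_mul_comp f g
  have s₀ : Summable fun z => conj (f z) * g z := hsumm (.refl _) (.refl _)
  have sl : Summable fun z => conj (f (z + 1)) * g z := hsumm (.addRight 1) (.refl _)
  have sr : Summable fun z => conj (f (z - 1)) * g z := hsumm (.subRight 1) (.refl _)
  have sl' : Summable fun z => conj (f z) * g (z + 1) := hsumm (.refl _) (.addRight 1)
  have sr' : Summable fun z => conj (f z) * g (z - 1) := hsumm (.refl _) (.subRight 1)
  have shift_left : ∑' z, conj (f (z + 1)) * g z = ∑' z, conj (f z) * g (z - 1) :=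
    ((Equiv.subRight 1).tsum_eq _).symm.trans (by simp)
  have shift_right : ∑' z, conj (f (z - 1)) * g z = ∑' z, conj (f z) * g (z + 1) :=
    ((Equiv.addRight 1).tsum_eq _).symm.trans (by simp)
  simp only [ContinuousLinearMap.coe_coe, lp.inner_eq_tsum, RCLike.inner_apply', hΔ f, hΔ g,
    map_add, map_sub, map_mul, map_ofNat, add_mul, sub_mul, mul_add, mul_sub, mul_assoc,
    mul_left_comm _ (2 : ℂ)]
  rw [(sl.add sr).tsum_sub (s₀.mul_left 2), sl.tsum_add sr, (sl'.add sr').tsum_sub (s₀.mul_left 2),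
    sl'.tsum_add sr', shift_left, shift_right, add_comm (∑' z, conj (f z) * g (z - 1))]

theorem norm_apply_le {f : ℓ²} {M : ℝ} (hf : ∀ z, ‖f z‖ ≤ M) (z : ℤ) : ‖Δ f z‖ ≤ 4 * M := by
  rw [hΔ f z]
  calc ‖f (z + 1) + f (z - 1) - 2 * f z‖ ≤ ‖f (z + 1)‖ + ‖f (z - 1)‖ + ‖2 * f z‖ :=
        norm_sub_le_of_le (norm_add_le _ _) le_rfl
    _ ≤ 4 * M := by rw [norm_mul, Complex.norm_two]; linarith [hf (z + 1), hf (z - 1), hf z]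

theorem apply_eq_zero {f : ℓ²} {y : ℤ} {m : ℕ} (hf : ∀ z, m < (z - y).natAbs → f z = 0) (z : ℤ)
    (hz : m + 1 < (z - y).natAbs) : Δ f z = 0 := by
  rw [hΔ f z, hf (z + 1) (by omega), hf (z - 1) (by omega), hf z (by omega)]
  ring

theorem norm_pow_apply_le {f : ℓ²} {M : ℝ} (hf : ∀ z, ‖f z‖ ≤ M) (n : ℕ) (z : ℤ) :
    ‖(Δ ^ n) f z‖ ≤ 4 ^ n * M := by
  induction n generalizing z with
  | zero => simpa using hf z
  | succ n ih =>
    rw [pow_succ', pow_succ', mul_assoc]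
    exact hΔ.norm_apply_le ih z

theorem pow_apply_eq_zero {f : ℓ²} {y : ℤ} {m : ℕ} (hf : ∀ z, m < (z - y).natAbs → f z = 0)
    (n : ℕ) (z : ℤ) (hz : m + n < (z - y).natAbs) : (Δ ^ n) f z = 0 := by
  induction n generalizing z with
  | zero => exact hf z hz
  | succ n ih =>
    rw [pow_succ']
    exact hΔ.apply_eq_zero ih z (by omega)

end IsDiscreteLaplacian

/-- For `x, y ∈ ℤ` and `|t| ≤ τ`, the matrix element of the free discrete Schrödinger
evolution satisfies `|⟨δ_x, e^{itΔ} δ_y⟩| ≤ min(1, e^{4τ} (4τ)^{|x-y|} / |x-y|!)`, where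
`Δ` is the discrete Laplacian `(Δf)(x) = f(x+1) + f(x-1) - 2 f(x)` on `ℓ²(ℤ)`. -/
theorem discrete_schroedinger_kernel_bound
    (Δ : ℓ² →L[ℂ] ℓ²)
    (hΔ : ∀ (f : ℓ²) (x : ℤ), (Δ f : ∀ _ : ℤ, ℂ) x
        = (f : ∀ _ : ℤ, ℂ) (x + 1) + (f : ∀ _ : ℤ, ℂ) (x - 1) - 2 * (f : ∀ _ : ℤ, ℂ) x)
    (x y : ℤ) (t τ : ℝ) (ht : |t| ≤ τ) :
    ‖(inner ℂ (lp.single 2 x (1 : ℂ))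
        ((NormedSpace.exp ((Complex.I * (t : ℂ)) • Δ)) (lp.single 2 y (1 : ℂ))) : ℂ)‖
      ≤ min 1 (Real.exp (4 * τ) * (4 * τ) ^ (x - y).natAbs / ((x - y).natAbs.factorial)) := by
  have hΔ : IsDiscreteLaplacian Δ := hΔ
  have hU : NormedSpace.exp ((Complex.I * (t : ℂ)) • Δ) ∈ unitary (ℓ² →L[ℂ] ℓ²) :=
    hΔ.isSelfAdjoint.exp_I_mul_smul_mem_unitary t
  have hsingle_le (z : ℤ) : ‖(lp.single 2 y (1 : ℂ) : ℓ²) z‖ ≤ 1 :=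
    (lp.norm_apply_le_norm two_ne_zero _ z).trans (by simp [lp.norm_single])
  have hsingle_eq_zero (z : ℤ) (hz : 0 < (z - y).natAbs) : (lp.single 2 y (1 : ℂ) : ℓ²) z = 0 :=
    lp.single_apply_ne _ _ _ (by omega)
  refine le_min ?_ ?_
  · calc _ ≤ ‖(lp.single 2 x (1 : ℂ) : ℓ²)‖ * ‖(lp.single 2 y (1 : ℂ) : ℓ²)‖ := by
          rw [← ContinuousLinearMap.norm_map_of_mem_unitary hU (lp.single 2 y 1)]
          exact norm_inner_le_norm _ _
      _ = 1 := by simp [lp.norm_single]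
  · rw [inner_exp_smul_apply_eq_tsum]
    refine norm_tsum_le_exp_mul_pow_div_factorial (fun n hn => ?_) (fun n => ?_)
    · rw [lp.inner_single_left, hΔ.pow_apply_eq_zero hsingle_eq_zero n x (by omega)]
      simp
    · rw [lp.inner_single_left]
      calc _ = |t| ^ n * ‖(Δ ^ n) (lp.single 2 y (1 : ℂ)) x‖ / n ! := by
            simp [div_mul_eq_mul_div]
        _ ≤ τ ^ n * (4 ^ n * 1) / n ! := by
          have hτ : 0 ≤ τ := (abs_nonneg t).trans ht
          gcongr
          exact hΔ.norm_pow_apply_le hsingle_le n x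
        _ = (4 * τ) ^ n / n ! := by ring
end
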